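/- MIPS equals IPS in expectation under no direct effect: under common support and common embedding support, and assuming q(x,a,e) = q(x,e), E_{p(x)π_b(a|x)p(e|x,a)}[ w(x,e)·q(x,e) ] = E_{p(x)π_b(a|x)}[ w(x,a)·q(x,a) ], both equaling V(π_e). -/

import Mathlib

/-! Both identities are instances of importance weighting: if `a` vanishes wherever `b` does,
then `∑ b * (a / b * f) = ∑ a * f`, with the junk value `a / 0 = 0` harmless on the null set
of `b`. For MIPS this is applied to the marginals `p(e|x,π)` after exchanging the sums over
actions and embeddings, and the no-direct-effect model `q(x,a) = ∑ₑ p(e|x,a) q(x,e)` turns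
`∑ₑ p(e|x,π_e) q(x,e)` back into `∑ₐ π_e(a|x) q(x,a)`. -/

open Finset

theorem eq_zero_of_pos_imp_pos {a b : ℝ} (ha : 0 ≤ a) (hab : 0 < a → 0 < b) (hb : b = 0) :
    a = 0 :=
  ha.eq_or_lt.elim Eq.symm fun h => absurd hb (hab h).ne'

theorem sum_mul_div_mul_eq_sum_mul {ι : Type*} (s : Finset ι) {a b f : ι → ℝ}
    (ha : ∀ i, 0 ≤ a i) (hab : ∀ i, 0 < a i → 0 < b i) :
    ∑ i ∈ s, b i * (a i / b i * f i) = ∑ i ∈ s, a i * f i :=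
  sum_congr rfl fun i _ => by
    rw [← mul_assoc, mul_div_cancel_of_imp' (eq_zero_of_pos_imp_pos (ha i) (hab i))]

theorem sum_mul_sum_mul_eq_sum_sum_mul {R ι κ : Type*} [CommSemiring R] (s : Finset ι)
    (t : Finset κ) (π : ι → R) (k : ι → κ → R) (g : κ → R) :
    ∑ i ∈ s, π i * ∑ j ∈ t, k i j * g j = ∑ j ∈ t, (∑ i ∈ s, π i * k i j) * g j := by
  simp only [mul_sum, sum_mul]
  rw [sum_comm]
  exact sum_congr rfl fun _ _ => sum_congr rfl fun _ _ => (mul_assoc _ _ _).symm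

theorem mips_eq_ips_in_expectation_general {X A E : Type*} [Fintype X] [Fintype A] [Fintype E]
    (p : X → ℝ) (πb πe : X → A → ℝ) (pe : X → A → E → ℝ)
    (qe : X → E → ℝ) (qA : X → A → ℝ)
    (pm : (X → A → ℝ) → X → E → ℝ)
    (hπe : ∀ x a, 0 ≤ πe x a)
    (hpe : ∀ x a e, 0 ≤ pe x a e)
    (hqA : ∀ x a, qA x a = ∑ e, pe x a e * qe x e)
    (hpm : ∀ π x e, pm π x e = ∑ a, π x a * pe x a e)
    (hsupport : ∀ x a, 0 < πe x a → 0 < πb x a)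
    (hembsupport : ∀ x e, 0 < pm πe x e → 0 < pm πb x e) :
    (∑ x, p x * ∑ a, πb x a * ∑ e, pe x a e * (pm πe x e / pm πb x e * qe x e)
      = ∑ x, p x * ∑ a, πb x a * (πe x a / πb x a * qA x a))
    ∧ (∑ x, p x * ∑ a, πb x a * (πe x a / πb x a * qA x a)
      = ∑ x, p x * ∑ a, πe x a * qA x a) := by
  have hpm_nonneg : ∀ x e, 0 ≤ pm πe x e := fun x e => by
    rw [hpm]
    exact sum_nonneg fun a _ => mul_nonneg (hπe x a) (hpe x a e)
  have hips : ∀ x, ∑ a, πb x a * (πe x a / πb x a * qA x a) = ∑ a, πe x a * qA x a :=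
    fun x => sum_mul_div_mul_eq_sum_mul _ (hπe x) (hsupport x)
  have hmips : ∀ x, ∑ a, πb x a * ∑ e, pe x a e * (pm πe x e / pm πb x e * qe x e)
      = ∑ a, πe x a * qA x a := fun x => calc
    _ = ∑ e, pm πb x e * (pm πe x e / pm πb x e * qe x e) := by
      rw [sum_mul_sum_mul_eq_sum_sum_mul]
      simp only [hpm]
    _ = ∑ e, pm πe x e * qe x e :=
      sum_mul_div_mul_eq_sum_mul _ (hpm_nonneg x) (hembsupport x)
    _ = ∑ a, πe x a * qA x a := by
      simp only [hqA, hpm, sum_mul_sum_mul_eq_sum_sum_mul]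
  exact ⟨sum_congr rfl fun x _ => by rw [hmips, hips],
    sum_congr rfl fun x _ => by rw [hips]⟩

/-- MIPS equals IPS in expectation under no direct effect: under common support and
common embedding support, the marginally weighted mean reward matches the vanilla
weighted mean reward, both equaling the value `V(π_e)`. -/
theorem mips_eq_ips_in_expectation {X A E : Type*} [Fintype X] [Fintype A] [Fintype E]
    (p : X → ℝ) (πb πe : X → A → ℝ) (pe : X → A → E → ℝ)
    (qe : X → E → ℝ) (qA : X → A → ℝ)
    (pm : (X → A → ℝ) → X → E → ℝ)
    (hp : ∀ x, 0 ≤ p x) (hpsum : ∑ x, p x = 1)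
    (hπb : ∀ x a, 0 ≤ πb x a) (hπbsum : ∀ x, ∑ a, πb x a = 1)
    (hπe : ∀ x a, 0 ≤ πe x a) (hπesum : ∀ x, ∑ a, πe x a = 1)
    (hpe : ∀ x a e, 0 ≤ pe x a e) (hpesum : ∀ x a, ∑ e, pe x a e = 1)
    (hqA : ∀ x a, qA x a = ∑ e, pe x a e * qe x e)
    (hpm : ∀ π x e, pm π x e = ∑ a, π x a * pe x a e)
    (hsupport : ∀ x a, 0 < πe x a → 0 < πb x a)
    (hembsupport : ∀ x e, 0 < pm πe x e → 0 < pm πb x e) :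
    (∑ x, p x * ∑ a, πb x a * ∑ e, pe x a e * (pm πe x e / pm πb x e * qe x e)
      = ∑ x, p x * ∑ a, πb x a * (πe x a / πb x a * qA x a))
    ∧ (∑ x, p x * ∑ a, πb x a * (πe x a / πb x a * qA x a)
      = ∑ x, p x * ∑ a, πe x a * qA x a) :=
  mips_eq_ips_in_expectation_general p πb πe pe qe qA pm hπe hpe hqA hpm hsupport hembsupport
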